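/- arXiv:2605.02103 — 4 statements merged into one kernel-verified Lean document; each statement's English description precedes it below -/
import Mathlib

section
/- Suppose η := min_{‖x‖=1} ( ‖Φx‖²_Dir + (μᵀΦx)² ) > 0, where the minimum is over unit vectors x ∈ ℝᵈ. Then the matrix Φᵀ D (I − Π P) Φ is invertible, and consequently the linear system Φᵀ D (I − Π P) Φ θ = Φᵀ D Π R has a unique solution. -/
/-!
The quadratic form of `Φᵀ D (I - Π P) Φ` at `x` is the Dirichlet energy of `f = Φ x` plus the
square of its `μ`-mean: row-stochasticity of `P` turns `fᵀ D (I - P) f` into the energy, and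
stationarity of `μ` collapses `fᵀ D e μᵀ P f` to `(μᵀ f)²`. By homogeneity the form is then at
least `η ‖x‖² > 0` for `x ≠ 0`, so the matrix has trivial kernel and is invertible.
-/

open Matrix Finset

section

variable {ι : Type*} [Fintype ι]

noncomputable def dirichletForm (P : Matrix ι ι ℝ) (μ f : ι → ℝ) : ℝ :=
  (1 / 2) * ∑ s, ∑ s', μ s * P s s' * (f s - f s') ^ 2

theorem dirichletForm_eq_dotProduct_mulVec [DecidableEq ι] {P : Matrix ι ι ℝ} {μ : ι → ℝ}
    (hstoch : ∀ i, ∑ j, P i j = 1) (hstat : ∀ j, ∑ i, μ i * P i j = μ j) (f : ι → ℝ) :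
    dirichletForm P μ f = f ⬝ᵥ (Matrix.diagonal μ * (1 - P)) *ᵥ f := by
  have hleft : ∑ s, ∑ s', μ s * P s s' * f s ^ 2 = ∑ s, μ s * f s ^ 2 := by
    simp_rw [mul_comm (μ _) (P _ _), mul_assoc, ← sum_mul, hstoch, one_mul]
  have hright : ∑ s, ∑ s', μ s * P s s' * f s' ^ 2 = ∑ s, μ s * f s ^ 2 := by
    rw [sum_comm]
    simp_rw [← sum_mul, hstat]
  have hrhs : f ⬝ᵥ (Matrix.diagonal μ * (1 - P)) *ᵥ f
      = ∑ s, μ s * f s ^ 2 - ∑ s, ∑ s', μ s * P s s' * (f s * f s') := by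
    rw [← mulVec_mulVec, sub_mulVec, one_mulVec, dotProduct, ← sum_sub_distrib]
    refine sum_congr rfl fun s _ => ?_
    rw [mulVec_diagonal, Pi.sub_apply]
    simp only [mulVec, dotProduct, mul_sub, mul_sum]
    congr 1
    · ring
    · exact sum_congr rfl fun s' _ => by ring
  have hcross : ∑ s, ∑ s', μ s * P s s' * (2 * f s * f s')
      = 2 * ∑ s, ∑ s', μ s * P s s' * (f s * f s') := by
    simp_rw [mul_sum]
    exact sum_congr rfl fun _ _ => sum_congr rfl fun _ _ => by ring
  rw [hrhs, dirichletForm]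
  simp_rw [sub_sq, mul_add, mul_sub, sum_add_distrib, sum_sub_distrib, hleft, hright, hcross]
  ring

theorem dotProduct_mulVec_diagonal_mul_vecMulVec_mul [DecidableEq ι] {P : Matrix ι ι ℝ}
    {μ : ι → ℝ} (hstat : μ ᵥ* P = μ) (f : ι → ℝ) :
    f ⬝ᵥ (Matrix.diagonal μ * vecMulVec (fun _ => 1) μ * P) *ᵥ f = (μ ⬝ᵥ f) ^ 2 := by
  have hmean : f ᵥ* Matrix.diagonal μ ⬝ᵥ (fun _ => 1) = μ ⬝ᵥ f := by
    simp [dotProduct, vecMul_diagonal, mul_comm]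
  rw [dotProduct_mulVec, ← vecMul_vecMul, ← vecMul_vecMul, vecMul_vecMulVec, hmean,
    smul_vecMul, hstat, smul_dotProduct, smul_eq_mul, sq]

theorem dotProduct_mulVec_transpose_mul_mul {κ : Type*} [Fintype κ] (Φ : Matrix ι κ ℝ)
    (M : Matrix ι ι ℝ) (x : κ → ℝ) :
    x ⬝ᵥ (Φᵀ * M * Φ) *ᵥ x = (Φ *ᵥ x) ⬝ᵥ M *ᵥ (Φ *ᵥ x) := by
  rw [← mulVec_mulVec, ← mulVec_mulVec, dotProduct_mulVec, vecMul_transpose]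

theorem dotProduct_mulVec_projectedBellman [DecidableEq ι] {κ : Type*} [Fintype κ]
    {P : Matrix ι ι ℝ} {μ : ι → ℝ}
    (hstoch : ∀ i, ∑ j, P i j = 1) (hstat : ∀ j, ∑ i, μ i * P i j = μ j)
    (Φ : Matrix ι κ ℝ) (x : κ → ℝ) :
    -- without the ascription the heterogeneous `*` is resolved through `CStarMatrix`
    x ⬝ᵥ (Φᵀ * Matrix.diagonal μ * (1 - (1 - vecMulVec (fun _ => (1 : ℝ)) μ) * P : Matrix ι ι ℝ)
        * Φ) *ᵥ x
      = dirichletForm P μ (Φ *ᵥ x) + (μ ⬝ᵥ Φ *ᵥ x) ^ 2 := by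
  have hstat' : μ ᵥ* P = μ := funext hstat
  have hsplit : Matrix.diagonal μ * (1 - (1 - vecMulVec (fun _ => (1 : ℝ)) μ) * P)
      = Matrix.diagonal μ * (1 - P) + Matrix.diagonal μ * vecMulVec (fun _ => 1) μ * P := by
    noncomm_ring
  rw [Matrix.mul_assoc Φᵀ, dotProduct_mulVec_transpose_mul_mul, hsplit, add_mulVec,
    dotProduct_add, ← dirichletForm_eq_dotProduct_mulVec hstoch hstat,
    dotProduct_mulVec_diagonal_mul_vecMulVec_mul hstat']

theorem dotProduct_mulVec_pos_of_le_on_unit_sphere {A : Matrix ι ι ℝ} {η : ℝ} (hη : 0 < η)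
    (hle : ∀ x, x ⬝ᵥ x = 1 → η ≤ x ⬝ᵥ A *ᵥ x) {v : ι → ℝ} (hv : v ≠ 0) :
    0 < v ⬝ᵥ A *ᵥ v := by
  have hvv : 0 < v ⬝ᵥ v := by simpa using dotProduct_self_star_pos_iff.mpr hv
  set s := √(v ⬝ᵥ v)
  have hs : 0 < s := Real.sqrt_pos.mpr hvv
  have hunit : (s⁻¹ • v) ⬝ᵥ (s⁻¹ • v) = 1 := by
    rw [smul_dotProduct, dotProduct_smul, smul_smul, smul_eq_mul, ← sq, inv_pow,
      Real.sq_sqrt hvv.le, inv_mul_cancel₀ hvv.ne']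
  have hscale : v ⬝ᵥ A *ᵥ v = s ^ 2 * ((s⁻¹ • v) ⬝ᵥ A *ᵥ (s⁻¹ • v)) := by
    rw [mulVec_smul, smul_dotProduct, dotProduct_smul, smul_smul, smul_eq_mul]
    field_simp
  rw [hscale]
  exact mul_pos (pow_pos hs 2) (hη.trans_le (hle _ hunit))

theorem isUnit_of_dotProduct_mulVec_pos {𝕜 : Type*} [Field 𝕜] [LinearOrder 𝕜]
    [IsStrictOrderedRing 𝕜] [DecidableEq ι] {A : Matrix ι ι 𝕜}
    (h : ∀ v ≠ 0, 0 < v ⬝ᵥ A *ᵥ v) : IsUnit A := by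
  rw [isUnit_iff_isUnit_det, isUnit_iff_ne_zero]
  intro hdet
  obtain ⟨v, hv, hAv⟩ := exists_mulVec_eq_zero_iff.mpr hdet
  simpa [hAv] using h v hv

end

theorem projected_bellman_unique_solution_general
    {n d : ℕ} (P : Matrix (Fin n) (Fin n) ℝ) (μ : Fin n → ℝ)
    (hstoch : ∀ i, ∑ j, P i j = 1)
    (hstat : ∀ j, ∑ i, μ i * P i j = μ j)
    (Φ : Matrix (Fin n) (Fin d) ℝ) (R : Fin n → ℝ)
    (η : ℝ) (hηpos : 0 < η)
    (hη : IsLeast {r : ℝ | ∃ x : Fin d → ℝ, (∑ i, (x i) ^ 2 = 1) ∧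
        r = (1 / 2) * (∑ s, ∑ s', μ s * P s s' *
              (Φ.mulVec x s - Φ.mulVec x s') ^ 2)
            + (∑ s, μ s * Φ.mulVec x s) ^ 2} η) :
    IsUnit (Φᵀ * Matrix.diagonal μ *
        ((1 - (1 - Matrix.vecMulVec (fun _ => (1 : ℝ)) μ) * P : Matrix (Fin n) (Fin n) ℝ)) * Φ) ∧
    ∃! θ : Fin d → ℝ,
      (Φᵀ * Matrix.diagonal μ *
        ((1 - (1 - Matrix.vecMulVec (fun _ => (1 : ℝ)) μ) * P : Matrix (Fin n) (Fin n) ℝ)) * Φ).mulVec θ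
      = (Φᵀ * Matrix.diagonal μ *
          (1 - Matrix.vecMulVec (fun _ => (1 : ℝ)) μ)).mulVec R := by
  set A := Φᵀ * Matrix.diagonal μ *
    (1 - (1 - vecMulVec (fun _ => (1 : ℝ)) μ) * P : Matrix (Fin n) (Fin n) ℝ) * Φ
  have hunit_sphere : ∀ x : Fin d → ℝ, x ⬝ᵥ x = 1 → η ≤ x ⬝ᵥ A *ᵥ x := fun x hx =>
    hη.2 ⟨x, by simpa [dotProduct, sq] using hx,
      dotProduct_mulVec_projectedBellman hstoch hstat Φ x⟩
  have hA : IsUnit A := isUnit_of_dotProduct_mulVec_pos fun _ hv =>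
    dotProduct_mulVec_pos_of_le_on_unit_sphere hηpos hunit_sphere hv
  exact ⟨hA, Function.Bijective.existsUnique
    ⟨mulVec_injective_iff_isUnit.mpr hA, mulVec_surjective_iff_isUnit.mpr hA⟩ _⟩

/-- If `η := min_{‖x‖=1}( ‖Φx‖²_Dir + (μᵀΦx)² ) > 0`, then the
matrix `ΦᵀD(I − ΠP)Φ` (with `Π = I − eμᵀ`) is invertible, and consequently the
linear system `ΦᵀD(I − ΠP)Φ θ = ΦᵀD Π R` has a unique solution. -/
theorem projected_bellman_unique_solution
    {n d : ℕ} (P : Matrix (Fin n) (Fin n) ℝ) (μ : Fin n → ℝ)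
    (hPnonneg : ∀ i j, 0 ≤ P i j)
    (hstoch : ∀ i, ∑ j, P i j = 1)
    (hμpos : ∀ i, 0 < μ i) (hμsum : ∑ i, μ i = 1)
    (hstat : ∀ j, ∑ i, μ i * P i j = μ j)
    (Φ : Matrix (Fin n) (Fin d) ℝ) (R : Fin n → ℝ)
    (η : ℝ) (hηpos : 0 < η)
    (hη : IsLeast {r : ℝ | ∃ x : Fin d → ℝ, (∑ i, (x i) ^ 2 = 1) ∧
        r = (1 / 2) * (∑ s, ∑ s', μ s * P s s' *
              (Φ.mulVec x s - Φ.mulVec x s') ^ 2)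
            + (∑ s, μ s * Φ.mulVec x s) ^ 2} η) :
    IsUnit (Φᵀ * Matrix.diagonal μ *
        ((1 - (1 - Matrix.vecMulVec (fun _ => (1 : ℝ)) μ) * P : Matrix (Fin n) (Fin n) ℝ)) * Φ) ∧
    ∃! θ : Fin d → ℝ,
      (Φᵀ * Matrix.diagonal μ *
        ((1 - (1 - Matrix.vecMulVec (fun _ => (1 : ℝ)) μ) * P : Matrix (Fin n) (Fin n) ℝ)) * Φ).mulVec θ
      = (Φᵀ * Matrix.diagonal μ *
          (1 - Matrix.vecMulVec (fun _ => (1 : ℝ)) μ)).mulVec R :=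
  projected_bellman_unique_solution_general P μ hstoch hstat Φ R η hηpos hη
end

section
/- Let A ∈ ℝ^{n×n} be symmetric positive semidefinite with Ae = 0, where e is the all-ones vector. Let μ ∈ ℝⁿ be entrywise positive with Σμᵢ = 1. Define λ = min{xᵀAx : ‖x‖₂ = 1, xᵀe = 0} and λ^{(μ)} = min{xᵀAx : ‖x‖₂ = 1, xᵀμ = 0}. Then λ^{(μ)} ≥ λ / (n ‖μ‖₂²). -/
/-!
Write `x = y + d • 1` with `∑ i, y i = 0`. Since `A 1 = 0` and `A` is symmetric, the quadratic
forms of `x` and `y` agree, so `λ ‖y‖² ≤ λ^{(μ)}` when `x` is a unit minimiser for `λ^{(μ)}`.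
It remains to see that `‖y‖² ≥ 1 / (n ‖μ‖²)`: as `x ⊥ μ`, we have `∑ i, x i = ⟪x, 1 - μ / ‖μ‖²⟫`,
and Cauchy–Schwarz with `‖1 - μ / ‖μ‖²‖² = n - 1 / ‖μ‖²` gives `(∑ i, x i)² ≤ n - 1 / ‖μ‖²`.
-/

open Matrix Finset

variable {ι : Type*} [Fintype ι]

lemma sq_sum_mul_sum_sq_le_of_sum_mul_eq_zero {x μ : ι → ℝ} (hxμ : ∑ i, x i * μ i = 0)
    (hμ : ∑ i, μ i = 1) :
    (∑ i, x i) ^ 2 * ∑ i, μ i ^ 2 ≤ (Fintype.card ι * ∑ i, μ i ^ 2 - 1) * ∑ i, x i ^ 2 := by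
  set M := ∑ i, μ i ^ 2
  have hM : 1 ≤ Fintype.card ι * M := by
    simpa [hμ] using sq_sum_le_card_mul_sum_sq (s := univ) (f := μ)
  have hM_pos : 0 < M := pos_of_mul_pos_right (one_pos.trans_le hM) (Nat.cast_nonneg _)
  have hsum : ∑ i, x i * (M - μ i) = (∑ i, x i) * M := by
    simp only [mul_sub, sum_sub_distrib, hxμ, sum_mul, sub_zero]
  have hnorm : ∑ i, (M - μ i) ^ 2 = M * (Fintype.card ι * M - 1) := by
    simp only [sub_sq, sum_add_distrib, sum_sub_distrib, ← mul_sum, hμ, sum_const, card_univ,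
      nsmul_eq_mul]
    ring
  have hcs := sum_mul_sq_le_sq_mul_sq univ x (fun i => M - μ i)
  rw [hsum, hnorm] at hcs
  exact le_of_mul_le_mul_left (by linear_combination hcs) hM_pos

noncomputable def centered (x : ι → ℝ) : ι → ℝ := x - ((∑ i, x i) / Fintype.card ι) • fun _ => 1

lemma sum_centered (x : ι → ℝ) : ∑ i, centered x i = 0 := by
  rcases isEmpty_or_nonempty ι with hι | hι
  · exact sum_of_isEmpty _
  have hcard : (Fintype.card ι : ℝ) ≠ 0 := by positivity
  simp [centered, sum_sub_distrib, mul_div_cancel₀ _ hcard]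

lemma sum_centered_sq (x : ι → ℝ) :
    ∑ i, centered x i ^ 2 = ∑ i, x i ^ 2 - (∑ i, x i) ^ 2 / Fintype.card ι := by
  rcases isEmpty_or_nonempty ι with hι | hι
  · simp
  simp only [centered, Pi.sub_apply, Pi.smul_apply, smul_eq_mul, mul_one, sub_sq,
    sum_add_distrib, sum_sub_distrib, ← sum_mul, ← mul_sum, sum_const, card_univ, nsmul_eq_mul]
  field_simp
  ring

lemma sum_sq_le_mul_sum_centered_sq {x μ : ι → ℝ} (hxμ : ∑ i, x i * μ i = 0)
    (hμ : ∑ i, μ i = 1) :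
    ∑ i, x i ^ 2 ≤ Fintype.card ι * (∑ i, μ i ^ 2) * ∑ i, centered x i ^ 2 := by
  have hι : Nonempty ι := by
    by_contra h
    simp [not_nonempty_iff.mp h] at hμ
  have hcard : (0 : ℝ) < Fintype.card ι := by exact_mod_cast Fintype.card_pos
  have hcancel : Fintype.card ι * (∑ i, μ i ^ 2) * ((∑ i, x i) ^ 2 / Fintype.card ι) =
      (∑ i, x i) ^ 2 * ∑ i, μ i ^ 2 := by
    field_simp
  rw [sum_centered_sq, mul_sub, hcancel]
  linarith [sq_sum_mul_sum_sq_le_of_sum_mul_eq_zero hxμ hμ]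

lemma dotProduct_mulVec_sub_smul_of_mulVec_eq_zero {A : Matrix ι ι ℝ} (hA : A.IsSymm)
    {v : ι → ℝ} (hv : A *ᵥ v = 0) (x : ι → ℝ) (c : ℝ) :
    (x - c • v) ⬝ᵥ A *ᵥ (x - c • v) = x ⬝ᵥ A *ᵥ x := by
  have hvA : v ⬝ᵥ A *ᵥ x = 0 := by
    rw [dotProduct_mulVec, ← hA.eq, vecMul_transpose, hv, zero_dotProduct]
  rw [mulVec_sub, mulVec_smul, hv, smul_zero, sub_zero, sub_dotProduct, smul_dotProduct, hvA,
    smul_zero, sub_zero]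

lemma mul_sum_sq_le_dotProduct_mulVec {P : (ι → ℝ) → Prop} (hP : ∀ (c : ℝ) x, P x → P (c • x))
    (A : Matrix ι ι ℝ) {lam : ℝ} (hlam : ∀ x, ∑ i, x i ^ 2 = 1 → P x → lam ≤ x ⬝ᵥ A *ᵥ x)
    {y : ι → ℝ} (hy : P y) : lam * ∑ i, y i ^ 2 ≤ y ⬝ᵥ A *ᵥ y := by
  set N := ∑ i, y i ^ 2
  rcases (sum_nonneg fun i _ => sq_nonneg (y i) : 0 ≤ N).eq_or_lt with hN | hN
  · have hy0 : y = 0 := funext fun i => by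
      simpa using (sum_eq_zero_iff_of_nonneg fun i _ => sq_nonneg (y i)).mp hN.symm i (mem_univ i)
    subst hy0
    simp [N]
  have hc : (√N)⁻¹ ^ 2 = N⁻¹ := by rw [inv_pow, Real.sq_sqrt hN.le]
  have hunit : ∑ i, ((√N)⁻¹ • y) i ^ 2 = 1 := by
    simp only [Pi.smul_apply, smul_eq_mul, mul_pow, ← mul_sum, hc]
    exact inv_mul_cancel₀ hN.ne'
  have := hlam _ hunit (hP _ y hy)
  rw [mulVec_smul, smul_dotProduct, dotProduct_smul, smul_smul, smul_eq_mul, ← sq, hc,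
    ← div_eq_inv_mul, le_div_iff₀ hN] at this
  linarith

theorem weighted_orthogonal_rayleigh_lower_bound_general
    {n : ℕ} (A : Matrix (Fin n) (Fin n) ℝ)
    (hA : A.PosSemidef)
    (hAe : A.mulVec (fun _ => (1 : ℝ)) = 0)
    (μ : Fin n → ℝ) (hμsum : ∑ i, μ i = 1)
    (lam lamμ : ℝ)
    (hlam : IsLeast {r : ℝ | ∃ x : Fin n → ℝ,
        (∑ i, (x i) ^ 2 = 1) ∧ (∑ i, x i = 0) ∧ r = x ⬝ᵥ A.mulVec x} lam)
    (hlamμ : IsLeast {r : ℝ | ∃ x : Fin n → ℝ,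
        (∑ i, (x i) ^ 2 = 1) ∧ (∑ i, x i * μ i = 0) ∧ r = x ⬝ᵥ A.mulVec x} lamμ) :
    lam / (n * ∑ i, (μ i) ^ 2) ≤ lamμ := by
  obtain ⟨x, hx_norm, hx_orth, rfl⟩ := hlamμ.1
  have hlam_nonneg : 0 ≤ lam := by
    obtain ⟨z, -, -, rfl⟩ := hlam.1
    exact hA.dotProduct_mulVec_nonneg z
  have hy_norm := sum_sq_le_mul_sum_centered_sq hx_orth hμsum
  rw [hx_norm, Fintype.card_fin] at hy_norm
  have hy := mul_sum_sq_le_dotProduct_mulVec (P := fun x => ∑ i, x i = 0)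
    (fun c x hx => by simp [← mul_sum, hx]) A (fun x h1 h0 => hlam.2 ⟨x, h1, h0, rfl⟩)
    (sum_centered x)
  rw [show centered x ⬝ᵥ A *ᵥ centered x = x ⬝ᵥ A *ᵥ x from
    dotProduct_mulVec_sub_smul_of_mulVec_eq_zero hA.1 hAe x _] at hy
  have hnM : 0 < (n : ℝ) * ∑ i, μ i ^ 2 :=
    pos_of_mul_pos_left (one_pos.trans_le hy_norm) (sum_nonneg fun i _ => sq_nonneg _)
  calc lam / (n * ∑ i, μ i ^ 2) ≤ lam * ∑ i, centered x i ^ 2 :=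
        (div_le_iff₀ hnM).2 (by nlinarith)
    _ ≤ x ⬝ᵥ A *ᵥ x := hy

/-- Let `A` be symmetric PSD with `Ae = 0`, `μ` entrywise positive
with `Σμᵢ = 1`. With `λ = min{xᵀAx : ‖x‖₂=1, xᵀe=0}` and
`λ^{(μ)} = min{xᵀAx : ‖x‖₂=1, xᵀμ=0}`, one has `λ^{(μ)} ≥ λ/(n‖μ‖₂²)`. -/
theorem weighted_orthogonal_rayleigh_lower_bound
    {n : ℕ} (A : Matrix (Fin n) (Fin n) ℝ)
    (hA : A.PosSemidef)
    (hAe : A.mulVec (fun _ => (1 : ℝ)) = 0)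
    (μ : Fin n → ℝ) (hμpos : ∀ i, 0 < μ i) (hμsum : ∑ i, μ i = 1)
    (lam lamμ : ℝ)
    (hlam : IsLeast {r : ℝ | ∃ x : Fin n → ℝ,
        (∑ i, (x i) ^ 2 = 1) ∧ (∑ i, x i = 0) ∧ r = x ⬝ᵥ A.mulVec x} lam)
    (hlamμ : IsLeast {r : ℝ | ∃ x : Fin n → ℝ,
        (∑ i, (x i) ^ 2 = 1) ∧ (∑ i, x i * μ i = 0) ∧ r = x ⬝ᵥ A.mulVec x} lamμ) :
    lam / (n * ∑ i, (μ i) ^ 2) ≤ lamμ :=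
  weighted_orthogonal_rayleigh_lower_bound_general A hA hAe μ hμsum lam lamμ hlam hlamμ
end

section
/- Define η₁ = min_{‖x‖=1}( ‖Φx‖²_Dir + (μᵀΦx)² ) and η₃ = (min_{‖x‖=1} xᵀΦᵀDΦx) · (min{yᵀD(I−P)y : ⟨y,e⟩_D = 0, ‖y‖_D = 1}). Then η₁ ≥ η₃/2. -/
open Matrix BigOperators Finset

/-- Expansion of the quadratic form `v ⬝ᵥ (D(I-P)) v` as explicit sums. -/
lemma quad_eq_aux {n : ℕ} (μ : Fin n → ℝ) (P : Matrix (Fin n) (Fin n) ℝ) (v : Fin n → ℝ) :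
    v ⬝ᵥ ((Matrix.diagonal μ * (1 - P)).mulVec v)
      = ∑ i, μ i * v i ^ 2 - ∑ i, μ i * (v i * ∑ j, P i j * v j) := by
  rw [← Matrix.mulVec_mulVec, Matrix.sub_mulVec, Matrix.one_mulVec, Matrix.mulVec_sub]
  simp only [dotProduct, Pi.sub_apply, Matrix.mulVec, dotProduct,
    Matrix.diagonal_apply, ite_mul, zero_mul, Finset.sum_ite_eq, Finset.mem_univ, if_true]
  rw [← Finset.sum_sub_distrib]
  apply Finset.sum_congr rfl
  intro i _
  ring

/-- Weighted Cauchy–Schwarz. -/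
lemma weighted_CS_aux {n : ℕ} (w a b : Fin n → ℝ) (hw : ∀ i, 0 ≤ w i) :
    (∑ i, w i * (a i * b i)) ^ 2 ≤ (∑ i, w i * a i ^ 2) * (∑ i, w i * b i ^ 2) := by
  have h := Finset.sum_mul_sq_le_sq_mul_sq Finset.univ
    (fun i => Real.sqrt (w i) * a i) (fun i => Real.sqrt (w i) * b i)
  have e1 : ∀ i : Fin n, (Real.sqrt (w i) * a i) * (Real.sqrt (w i) * b i) = w i * (a i * b i) := by
    intro i
    have h0 : Real.sqrt (w i) * Real.sqrt (w i) = w i := Real.mul_self_sqrt (hw i)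
    calc (Real.sqrt (w i) * a i) * (Real.sqrt (w i) * b i)
        = (Real.sqrt (w i) * Real.sqrt (w i)) * (a i * b i) := by ring
      _ = w i * (a i * b i) := by rw [h0]
  have e2 : ∀ i : Fin n, (Real.sqrt (w i) * a i) ^ 2 = w i * a i ^ 2 := by
    intro i
    have : Real.sqrt (w i) ^ 2 = w i := Real.sq_sqrt (hw i)
    rw [mul_pow, this]
  have e3 : ∀ i : Fin n, (Real.sqrt (w i) * b i) ^ 2 = w i * b i ^ 2 := by
    intro i
    have : Real.sqrt (w i) ^ 2 = w i := Real.sq_sqrt (hw i)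
    rw [mul_pow, this]
  simp only [e1, e2, e3] at h
  exact h

/-- Jensen / contraction pointwise: `(Pv)_i² ≤ ∑_j P i j v_j²`. -/
lemma jensen_aux {n : ℕ} (P : Matrix (Fin n) (Fin n) ℝ)
    (hP : ∀ i j, 0 ≤ P i j) (hstoch : ∀ i, ∑ j, P i j = 1)
    (v : Fin n → ℝ) (i : Fin n) :
    (∑ j, P i j * v j) ^ 2 ≤ ∑ j, P i j * v j ^ 2 := by
  have h := weighted_CS_aux (P i) (fun _ => (1 : ℝ)) v (hP i)
  simp only [one_mul, one_pow, mul_one] at h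
  rw [hstoch i, one_mul] at h
  exact h

/-- The Markov operator is a contraction in `L²(μ)`. -/
lemma contraction_aux {n : ℕ} (P : Matrix (Fin n) (Fin n) ℝ) (μ : Fin n → ℝ)
    (hP : ∀ i j, 0 ≤ P i j) (hstoch : ∀ i, ∑ j, P i j = 1)
    (hμpos : ∀ i, 0 < μ i) (hstat : ∀ j, ∑ i, μ i * P i j = μ j)
    (v : Fin n → ℝ) :
    ∑ i, μ i * (∑ j, P i j * v j) ^ 2 ≤ ∑ i, μ i * v i ^ 2 := by
  have step1 : ∑ i, μ i * (∑ j, P i j * v j) ^ 2 ≤ ∑ i, μ i * ∑ j, P i j * v j ^ 2 := by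
    apply Finset.sum_le_sum
    intro i _
    exact mul_le_mul_of_nonneg_left (jensen_aux P hP hstoch v i) (hμpos i).le
  have step2 : ∑ i, μ i * ∑ j, P i j * v j ^ 2 = ∑ i, μ i * v i ^ 2 := by
    calc ∑ i, μ i * ∑ j, P i j * v j ^ 2
        = ∑ i, ∑ j, μ i * P i j * v j ^ 2 := by
          apply Finset.sum_congr rfl; intro i _
          rw [Finset.mul_sum]; apply Finset.sum_congr rfl; intro j _; ring
      _ = ∑ j, ∑ i, μ i * P i j * v j ^ 2 := Finset.sum_comm
      _ = ∑ j, μ j * v j ^ 2 := by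
          apply Finset.sum_congr rfl; intro j _
          rw [← Finset.sum_mul, hstat j]
  linarith [step1, step2.le, step2.ge]

/-- The "transported mass" identity: `∑_i μ_i (Pv)_i = ∑_j μ_j v_j`. -/
lemma stat_sum_aux {n : ℕ} (P : Matrix (Fin n) (Fin n) ℝ) (μ : Fin n → ℝ)
    (hstat : ∀ j, ∑ i, μ i * P i j = μ j) (v : Fin n → ℝ) :
    ∑ i, μ i * ∑ j, P i j * v j = ∑ j, μ j * v j := by
  calc ∑ i, μ i * ∑ j, P i j * v j
      = ∑ i, ∑ j, μ i * P i j * v j := by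
        apply Finset.sum_congr rfl; intro i _
        rw [Finset.mul_sum]; apply Finset.sum_congr rfl; intro j _; ring
    _ = ∑ j, ∑ i, μ i * P i j * v j := Finset.sum_comm
    _ = ∑ j, μ j * v j := by
        apply Finset.sum_congr rfl; intro j _
        rw [← Finset.sum_mul, hstat j]

/-- With
`η₁ = min_{‖x‖=1}( ‖Φx‖²_Dir + (μᵀΦx)² )` and
`η₃ = (min_{‖x‖=1} xᵀΦᵀDΦx) · (min{yᵀD(I−P)y : ⟨y,e⟩_D = 0, ‖y‖_D = 1})`,
one has `η₁ ≥ η₃/2`.  (Here `‖v‖²_Dir = vᵀD(I−P)v`.) -/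
theorem eta1_ge_half_eta3
    {n d : ℕ} (P : Matrix (Fin n) (Fin n) ℝ) (μ : Fin n → ℝ)
    (hPnonneg : ∀ i j, 0 ≤ P i j)
    (hstoch : ∀ i, ∑ j, P i j = 1)
    (hμpos : ∀ i, 0 < μ i) (hμsum : ∑ i, μ i = 1)
    (hstat : ∀ j, ∑ i, μ i * P i j = μ j)
    (Φ : Matrix (Fin n) (Fin d) ℝ)
    (η₁ σ lam : ℝ)
    (hη₁ : IsLeast {r : ℝ | ∃ x : Fin d → ℝ, (∑ i, (x i) ^ 2 = 1) ∧
        r = (Φ.mulVec x) ⬝ᵥ ((Matrix.diagonal μ * (1 - P)).mulVec (Φ.mulVec x))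
            + (∑ s, μ s * Φ.mulVec x s) ^ 2} η₁)
    (hσ : IsLeast {r : ℝ | ∃ x : Fin d → ℝ, (∑ i, (x i) ^ 2 = 1) ∧
        r = ∑ s, μ s * (Φ.mulVec x s) ^ 2} σ)
    (hlam : IsLeast {r : ℝ | ∃ y : Fin n → ℝ,
        (∑ s, μ s * y s = 0) ∧ (∑ s, μ s * (y s) ^ 2 = 1) ∧
        r = y ⬝ᵥ ((Matrix.diagonal μ * (1 - P)).mulVec y)} lam) :
    η₁ ≥ σ * lam / 2 := by
  -- Bounds on lam: 0 ≤ lam ≤ 2.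
  obtain ⟨y, hy0, hy1, hyval⟩ := hlam.1
  have hyq : lam = ∑ i, μ i * y i ^ 2 - ∑ i, μ i * (y i * ∑ j, P i j * y j) := by
    rw [hyval, quad_eq_aux]
  set S : ℝ := ∑ i, μ i * (y i * ∑ j, P i j * y j) with hS
  have hCS : S ^ 2 ≤ (∑ i, μ i * y i ^ 2) * (∑ i, μ i * (∑ j, P i j * y j) ^ 2) :=
    weighted_CS_aux μ y (fun i => ∑ j, P i j * y j) (fun i => (hμpos i).le)
  have hcon : ∑ i, μ i * (∑ j, P i j * y j) ^ 2 ≤ ∑ i, μ i * y i ^ 2 :=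
    contraction_aux P μ hPnonneg hstoch hμpos hstat y
  rw [hy1] at hCS hcon
  rw [one_mul] at hCS
  have hS2 : S ^ 2 ≤ 1 := le_trans hCS hcon
  have hlam0 : 0 ≤ lam := by nlinarith [hyq, hy1, hS2]
  have hlam2 : lam ≤ 2 := by nlinarith [hyq, hy1, hS2]
  -- σ ≥ 0.
  obtain ⟨x', hx', hσval⟩ := hσ.1
  have hσ0 : 0 ≤ σ := by
    rw [hσval]
    apply Finset.sum_nonneg
    intro i _
    exact mul_nonneg (hμpos i).le (sq_nonneg _)
  -- Unpack η₁.
  obtain ⟨x, hx, hη⟩ := hη₁.1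
  set v : Fin n → ℝ := Φ.mulVec x with hv
  set c : ℝ := ∑ s, μ s * v s with hc
  set B : ℝ := ∑ i, μ i * v i ^ 2 with hB
  set T : ℝ := ∑ i, μ i * (v i * ∑ j, P i j * v j) with hT
  have hηval : η₁ = (B - T) + c ^ 2 := by
    rw [hη, quad_eq_aux]
  -- σ ≤ B.
  have hσB : σ ≤ B := hσ.2 ⟨x, hx, rfl⟩
  -- Centered vector u.
  set u : Fin n → ℝ := fun i => v i - c with hu
  have hu0 : ∑ i, μ i * u i = 0 := by
    have : ∑ i, μ i * u i = (∑ i, μ i * v i) - c * ∑ i, μ i := by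
      rw [Finset.mul_sum, ← Finset.sum_sub_distrib]
      apply Finset.sum_congr rfl; intro i _; simp only [hu]; ring
    rw [this, hμsum, ← hc]; ring
  set A : ℝ := ∑ i, μ i * u i ^ 2 with hA
  have hA0 : 0 ≤ A := by
    apply Finset.sum_nonneg; intro i _; exact mul_nonneg (hμpos i).le (sq_nonneg _)
  have hAB : A = B - c ^ 2 := by
    have expand : ∑ i, μ i * u i ^ 2
        = (∑ i, μ i * v i ^ 2) - 2 * c * (∑ i, μ i * v i) + c ^ 2 * (∑ i, μ i) := by
      have hpt : ∀ i : Fin n, μ i * u i ^ 2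
          = μ i * v i ^ 2 - 2 * c * (μ i * v i) + c ^ 2 * μ i := by
        intro i; simp only [hu]; ring
      rw [Finset.sum_congr rfl (fun i _ => hpt i), Finset.sum_add_distrib,
        Finset.sum_sub_distrib, ← Finset.mul_sum, ← Finset.mul_sum]
    rw [hA, expand, hμsum, ← hc]; ring
  -- Dirichlet form is shift-invariant: Q(u) = Q(v) = B - T.
  have hPu : ∀ i, (∑ j, P i j * u j) = (∑ j, P i j * v j) - c := by
    intro i
    have : ∑ j, P i j * u j = (∑ j, P i j * v j) - c * ∑ j, P i j := by
      rw [Finset.mul_sum, ← Finset.sum_sub_distrib]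
      apply Finset.sum_congr rfl; intro j _; simp only [hu]; ring
    rw [this, hstoch i]; ring
  have hQu : A - (∑ i, μ i * (u i * ∑ j, P i j * u j)) = B - T := by
    have key : ∀ i, μ i * u i ^ 2 - μ i * (u i * ∑ j, P i j * u j)
        = (μ i * v i ^ 2 - μ i * (v i * ∑ j, P i j * v j))
          - c * (μ i * v i - μ i * (∑ j, P i j * v j)) := by
      intro i
      rw [hPu i]
      simp only [hu]
      ring
    have sum_eq : ∑ i, (μ i * u i ^ 2 - μ i * (u i * ∑ j, P i j * u j))
        = (B - T) - c * ((∑ i, μ i * v i) - ∑ i, μ i * ∑ j, P i j * v j) := by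
      rw [Finset.sum_congr rfl (fun i _ => key i)]
      rw [Finset.sum_sub_distrib, ← Finset.mul_sum, Finset.sum_sub_distrib,
        Finset.sum_sub_distrib]
    rw [stat_sum_aux P μ hstat v] at sum_eq
    have : ∑ i, (μ i * u i ^ 2 - μ i * (u i * ∑ j, P i j * u j))
        = A - ∑ i, μ i * (u i * ∑ j, P i j * u j) := by
      rw [Finset.sum_sub_distrib]
    rw [this] at sum_eq
    rw [sum_eq]; ring
  -- Key bound: Q(u) ≥ lam * A.
  have hkey : lam * A ≤ B - T := by
    rcases eq_or_lt_of_le hA0 with hA0' | hApos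
    · -- A = 0: u = 0, Q(u) = 0.
      have hA0'' : A = 0 := hA0'.symm
      have huz : ∀ i, u i = 0 := by
        intro i
        have hnn : ∀ i ∈ Finset.univ, (0:ℝ) ≤ μ i * u i ^ 2 :=
          fun i _ => mul_nonneg (hμpos i).le (sq_nonneg _)
        have hz := (Finset.sum_eq_zero_iff_of_nonneg hnn).mp hA0'' i (Finset.mem_univ i)
        rcases mul_eq_zero.mp hz with h | h
        · exact absurd h (ne_of_gt (hμpos i))
        · exact pow_eq_zero_iff (by norm_num) |>.mp h
      have : ∑ i, μ i * (u i * ∑ j, P i j * u j) = 0 := by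
        apply Finset.sum_eq_zero; intro i _; rw [huz i]; ring
      rw [← hQu, this, hA0'']; simp
    · -- A > 0: normalize u and use the lower-bound property of lam.
      set s : ℝ := Real.sqrt A with hs
      have hspos : 0 < s := Real.sqrt_pos.mpr hApos
      have hs2 : s ^ 2 = A := Real.sq_sqrt hA0
      set z : Fin n → ℝ := fun i => u i / s with hz
      have hz0 : ∑ i, μ i * z i = 0 := by
        have : ∑ i, μ i * z i = (∑ i, μ i * u i) / s := by
          rw [Finset.sum_div]
          apply Finset.sum_congr rfl; intro i _; simp only [hz]; ring
        rw [this, hu0, zero_div]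
      have hz1 : ∑ i, μ i * z i ^ 2 = 1 := by
        have : ∑ i, μ i * z i ^ 2 = (∑ i, μ i * u i ^ 2) / s ^ 2 := by
          rw [Finset.sum_div]
          apply Finset.sum_congr rfl; intro i _; simp only [hz]
          field_simp
        rw [this, ← hA, hs2, div_self (ne_of_gt hApos)]
      have hPz : ∀ i, (∑ j, P i j * z j) = (∑ j, P i j * u j) / s := by
        intro i
        rw [Finset.sum_div]
        apply Finset.sum_congr rfl; intro j _; simp only [hz]; ring
      have hQz : ∑ i, μ i * z i ^ 2 - ∑ i, μ i * (z i * ∑ j, P i j * z j)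
          = (A - ∑ i, μ i * (u i * ∑ j, P i j * u j)) / A := by
        rw [hz1]
        have h2 : ∑ i, μ i * (z i * ∑ j, P i j * z j)
            = (∑ i, μ i * (u i * ∑ j, P i j * u j)) / A := by
          rw [Finset.sum_div]
          apply Finset.sum_congr rfl; intro i _
          rw [hPz i]
          simp only [hz]
          rw [div_mul_div_comm, ← hs2]
          ring
        rw [h2]
        field_simp
      have hmem : lam ≤ ∑ i, μ i * z i ^ 2 - ∑ i, μ i * (z i * ∑ j, P i j * z j) := by
        have := hlam.2 ⟨z, hz0, hz1, rfl⟩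
        rwa [quad_eq_aux] at this
      rw [hQz, hQu] at hmem
      rwa [le_div_iff₀ hApos] at hmem
  -- Conclude.
  nlinarith [hηval, hσB, hAB, hkey, hlam0, hlam2, hA0, hσ0, sq_nonneg c]
end

section
/- Suppose the contraction bound ‖Π T_π W₁ − Π T_π W₂‖_D ≤ ω‖W₁ − W₂‖_D holds with ω < 1, Π T_π Φθ* = Φθ*, and W* = Π T_π W*. Then ‖Φθ* − W*‖_D ≤ (1/√(1−ω²)) ‖W* − Π_D Π T_π W*‖_D, where Π_D is D-orthogonal projection onto the column space of Φ and Φθ* = Π_D Π T_π Φθ*. Consequently ‖Φθ*‖_D ≤ 2‖W*‖_D / √(1−ω²). -/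
open Matrix BigOperators Finset

/-- The `D`-weighted inner product `⟨a,b⟩_D = Σ_s μ(s) a(s) b(s)`. -/
def innerD {n : ℕ} (μ a b : Fin n → ℝ) : ℝ := ∑ s, μ s * a s * b s

/-- The `D`-norm `‖v‖_D = sqrt(Σ_s μ(s) v(s)²)`. -/
noncomputable def normD {n : ℕ} (μ v : Fin n → ℝ) : ℝ :=
  Real.sqrt (∑ s, μ s * (v s) ^ 2)

lemma normD_nonneg' {n : ℕ} (μ v : Fin n → ℝ) : 0 ≤ normD μ v := Real.sqrt_nonneg _

lemma sumD_nonneg {n : ℕ} {μ : Fin n → ℝ} (hμ : ∀ i, 0 ≤ μ i) (v : Fin n → ℝ) :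
    0 ≤ ∑ s, μ s * (v s) ^ 2 :=
  Finset.sum_nonneg fun s _ => mul_nonneg (hμ s) (sq_nonneg _)

lemma normD_sq' {n : ℕ} {μ : Fin n → ℝ} (hμ : ∀ i, 0 ≤ μ i) (v : Fin n → ℝ) :
    normD μ v ^ 2 = ∑ s, μ s * (v s) ^ 2 :=
  Real.sq_sqrt (sumD_nonneg hμ v)

lemma le_of_sq_le_sq'' {a b : ℝ} (ha : 0 ≤ a) (hb : 0 ≤ b) (h : a ^ 2 ≤ b ^ 2) : a ≤ b := by
  nlinarith

lemma sum_expand {n : ℕ} (μ a b : Fin n → ℝ) :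
    ∑ s, μ s * ((a + b) s) ^ 2
      = (∑ s, μ s * (a s) ^ 2) + 2 * innerD μ a b + ∑ s, μ s * (b s) ^ 2 := by
  unfold innerD
  rw [Finset.mul_sum, ← Finset.sum_add_distrib, ← Finset.sum_add_distrib]
  exact Finset.sum_congr rfl fun s _ => by simp only [Pi.add_apply]; ring

lemma pythD {n : ℕ} {μ : Fin n → ℝ} (hμ : ∀ i, 0 ≤ μ i) (a b : Fin n → ℝ)
    (h : innerD μ a b = 0) :
    normD μ (a + b) ^ 2 = normD μ a ^ 2 + normD μ b ^ 2 := by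
  rw [normD_sq' hμ, normD_sq' hμ, normD_sq' hμ, sum_expand, h]; ring

lemma innerD_le {n : ℕ} {μ : Fin n → ℝ} (hμ : ∀ i, 0 ≤ μ i) (a b : Fin n → ℝ) :
    innerD μ a b ≤ normD μ a * normD μ b := by
  have key : (innerD μ a b) ^ 2 ≤ (∑ s, μ s * (a s) ^ 2) * (∑ s, μ s * (b s) ^ 2) := by
    have h := Finset.sum_mul_sq_le_sq_mul_sq Finset.univ
      (fun s => Real.sqrt (μ s) * a s) (fun s => Real.sqrt (μ s) * b s)
    have h1 : ∀ s : Fin n, (Real.sqrt (μ s) * a s) * (Real.sqrt (μ s) * b s)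
        = μ s * a s * b s := by
      intro s
      have h : Real.sqrt (μ s) * Real.sqrt (μ s) = μ s := Real.mul_self_sqrt (hμ s)
      calc (Real.sqrt (μ s) * a s) * (Real.sqrt (μ s) * b s)
          = (Real.sqrt (μ s) * Real.sqrt (μ s)) * (a s * b s) := by ring
        _ = μ s * a s * b s := by rw [h]; ring
    have h2 : ∀ s : Fin n, (Real.sqrt (μ s) * a s) ^ 2 = μ s * (a s) ^ 2 := by
      intro s
      have h : Real.sqrt (μ s) * Real.sqrt (μ s) = μ s := Real.mul_self_sqrt (hμ s)
      calc (Real.sqrt (μ s) * a s) ^ 2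
          = (Real.sqrt (μ s) * Real.sqrt (μ s)) * (a s) ^ 2 := by ring
        _ = μ s * (a s) ^ 2 := by rw [h]
    have h3 : ∀ s : Fin n, (Real.sqrt (μ s) * b s) ^ 2 = μ s * (b s) ^ 2 := by
      intro s
      have h : Real.sqrt (μ s) * Real.sqrt (μ s) = μ s := Real.mul_self_sqrt (hμ s)
      calc (Real.sqrt (μ s) * b s) ^ 2
          = (Real.sqrt (μ s) * Real.sqrt (μ s)) * (b s) ^ 2 := by ring
        _ = μ s * (b s) ^ 2 := by rw [h]
    simp only [h1, h2, h3] at h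
    exact h
  have h4 : innerD μ a b ≤ |innerD μ a b| := le_abs_self _
  have h5 : |innerD μ a b| = Real.sqrt ((innerD μ a b) ^ 2) := (Real.sqrt_sq_eq_abs _).symm
  calc innerD μ a b ≤ Real.sqrt ((innerD μ a b) ^ 2) := h5 ▸ h4
    _ ≤ Real.sqrt ((∑ s, μ s * (a s) ^ 2) * (∑ s, μ s * (b s) ^ 2)) := Real.sqrt_le_sqrt key
    _ = normD μ a * normD μ b := by
        rw [Real.sqrt_mul (sumD_nonneg hμ a)]; rfl

lemma normD_add_le {n : ℕ} {μ : Fin n → ℝ} (hμ : ∀ i, 0 ≤ μ i) (a b : Fin n → ℝ) :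
    normD μ (a + b) ≤ normD μ a + normD μ b := by
  apply le_of_sq_le_sq'' (normD_nonneg' _ _)
    (add_nonneg (normD_nonneg' _ _) (normD_nonneg' _ _))
  rw [normD_sq' hμ, sum_expand]
  have hcs := innerD_le hμ a b
  have ha := normD_sq' hμ a
  have hb := normD_sq' hμ b
  nlinarith

/-- If `ΠT_π` is an `ω`-contraction in the `D`-norm with `ω < 1`,
`ΠT_π(Φθ*) = Φθ*`... more precisely, `Φθ* = Π_D ΠT_π Φθ*` where `Π_D` is the
`D`-orthogonal projection onto `col(Φ)`, and `W* = ΠT_π W*`, then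
`‖Φθ* − W*‖_D ≤ (1/√(1−ω²))‖W* − Π_D ΠT_π W*‖_D` and consequently
`‖Φθ*‖_D ≤ 2‖W*‖_D/√(1−ω²)`. -/
theorem projected_fixed_point_error_bound
    {n d : ℕ} (μ : Fin n → ℝ) (hμpos : ∀ i, 0 < μ i)
    (T : (Fin n → ℝ) → (Fin n → ℝ))
    (ω : ℝ) (hω0 : 0 ≤ ω) (hω1 : ω < 1)
    (hcontr : ∀ W₁ W₂ : Fin n → ℝ,
      normD μ (T W₁ - T W₂) ≤ ω * normD μ (W₁ - W₂))
    (Φ : Matrix (Fin n) (Fin d) ℝ)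
    (Q : (Fin n → ℝ) →ₗ[ℝ] (Fin n → ℝ))
    -- `Q` is the `D`-orthogonal projection onto the column space of `Φ`:
    (hQrange : ∀ v : Fin n → ℝ, ∃ x : Fin d → ℝ, Q v = Φ.mulVec x)
    (hQfix : ∀ x : Fin d → ℝ, Q (Φ.mulVec x) = Φ.mulVec x)
    (hQadj : ∀ a b : Fin n → ℝ, innerD μ (Q a) b = innerD μ a (Q b))
    (θstar : Fin d → ℝ) (Wstar : Fin n → ℝ)
    (hWfix : T Wstar = Wstar)
    (hθfix : Q (T (Φ.mulVec θstar)) = Φ.mulVec θstar) :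
    normD μ (Φ.mulVec θstar - Wstar)
      ≤ (1 / Real.sqrt (1 - ω ^ 2)) * normD μ (Wstar - Q (T Wstar)) ∧
    normD μ (Φ.mulVec θstar) ≤ 2 * normD μ Wstar / Real.sqrt (1 - ω ^ 2) := by
  have hμ : ∀ i, 0 ≤ μ i := fun i => (hμpos i).le
  set V : Fin n → ℝ := Φ.mulVec θstar with hVdef
  -- Q is idempotent
  have Qidem : ∀ v, Q (Q v) = Q v := by
    intro v
    obtain ⟨x, hx⟩ := hQrange v
    rw [hx, hQfix]
  have hQV : Q V = V := by
    conv_lhs => rw [← hθfix]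
    rw [Qidem, hθfix]
  -- residual is orthogonal to anything in the range of Q
  have innerD_zero_left : ∀ b : Fin n → ℝ, innerD μ (0 : Fin n → ℝ) b = 0 := by
    intro b; simp [innerD]
  have orth : ∀ v w : Fin n → ℝ, innerD μ (Q v) (w - Q w) = 0 := by
    intro v w
    rw [hQadj, map_sub, Qidem, sub_self]
    simp [innerD]
  have innerD_neg_right : ∀ a b : Fin n → ℝ, innerD μ a (-b) = - innerD μ a b := by
    intro a b
    simp [innerD, mul_neg, Finset.sum_neg_distrib]
  have normD_neg : ∀ v : Fin n → ℝ, normD μ (-v) = normD μ v := by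
    intro v; simp [normD, neg_sq]
  -- nonexpansiveness of Q
  have Qnonexp : ∀ v, normD μ (Q v) ≤ normD μ v := by
    intro v
    have hdec : Q v + (v - Q v) = v := by abel
    have hp := pythD hμ (Q v) (v - Q v) (orth v v)
    rw [hdec] at hp
    apply le_of_sq_le_sq'' (normD_nonneg' _ _) (normD_nonneg' _ _)
    nlinarith [sq_nonneg (normD μ (v - Q v))]
  -- residual bound
  have resid_le : ∀ v, normD μ (v - Q v) ≤ normD μ v := by
    intro v
    have hdec : Q v + (v - Q v) = v := by abel
    have hp := pythD hμ (Q v) (v - Q v) (orth v v)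
    rw [hdec] at hp
    apply le_of_sq_le_sq'' (normD_nonneg' _ _) (normD_nonneg' _ _)
    nlinarith [sq_nonneg (normD μ (Q v))]
  set A : ℝ := normD μ (V - Wstar) with hAdef
  set B : ℝ := normD μ (Wstar - Q Wstar) with hBdef
  set C : ℝ := normD μ (Q (V - Wstar)) with hCdef
  have hA0 : 0 ≤ A := normD_nonneg' _ _
  have hB0 : 0 ≤ B := normD_nonneg' _ _
  have hC0 : 0 ≤ C := normD_nonneg' _ _
  -- Pythagoras: A² = C² + B²
  have hdecomp : V - Wstar = Q (V - Wstar) + -(Wstar - Q Wstar) := by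
    rw [map_sub, hQV]; abel
  have hinner : innerD μ (Q (V - Wstar)) (-(Wstar - Q Wstar)) = 0 := by
    rw [innerD_neg_right, orth, neg_zero]
  have hA2 : A ^ 2 = C ^ 2 + B ^ 2 := by
    rw [hAdef, hdecomp, pythD hμ _ _ hinner, normD_neg]
  -- contraction: C ≤ ω * A
  have hQTW : Q (T Wstar) = Q Wstar := by rw [hWfix]
  have hCrw : Q (V - Wstar) = Q (T V - T Wstar) := by
    rw [map_sub, map_sub, hθfix, hQTW, hQV]
  have hC : C ≤ ω * A := by
    calc C = normD μ (Q (T V - T Wstar)) := by rw [hCdef, hCrw]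
      _ ≤ normD μ (T V - T Wstar) := Qnonexp _
      _ ≤ ω * normD μ (V - Wstar) := hcontr V Wstar
      _ = ω * A := rfl
  have h1ω : 0 < 1 - ω ^ 2 := by nlinarith
  set s : ℝ := Real.sqrt (1 - ω ^ 2) with hsdef
  have hs0 : 0 < s := Real.sqrt_pos.mpr h1ω
  have hs2 : s ^ 2 = 1 - ω ^ 2 := Real.sq_sqrt h1ω.le
  have hs1 : s ≤ 1 := by
    rw [hsdef]
    calc Real.sqrt (1 - ω ^ 2) ≤ Real.sqrt 1 := Real.sqrt_le_sqrt (by nlinarith)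
      _ = 1 := Real.sqrt_one
  -- key inequality: (1 - ω²) A² ≤ B²
  have hkey : (1 - ω ^ 2) * A ^ 2 ≤ B ^ 2 := by nlinarith
  have hmain : A ≤ (1 / s) * B := by
    have hAs : A * s ≤ B := by
      apply le_of_sq_le_sq'' (mul_nonneg hA0 hs0.le) hB0
      calc (A * s) ^ 2 = (1 - ω ^ 2) * A ^ 2 := by rw [mul_pow, hs2]; ring
        _ ≤ B ^ 2 := hkey
    rw [one_div, inv_mul_eq_div, le_div_iff₀ hs0]
    exact hAs
  constructor
  · rw [hQTW]; exact hmain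
  · have hBW : B ≤ normD μ Wstar := resid_le Wstar
    have htri : normD μ V ≤ A + normD μ Wstar := by
      have : V = (V - Wstar) + Wstar := by abel
      calc normD μ V = normD μ ((V - Wstar) + Wstar) := by rw [← this]
        _ ≤ A + normD μ Wstar := normD_add_le hμ _ _
    have hW0 : 0 ≤ normD μ Wstar := normD_nonneg' _ _
    have hW1 : normD μ Wstar ≤ normD μ Wstar / s := by
      rw [le_div_iff₀ hs0]; nlinarith
    have hA1 : A ≤ normD μ Wstar / s := by
      calc A ≤ (1 / s) * B := hmain
        _ ≤ (1 / s) * normD μ Wstar := by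
            apply mul_le_mul_of_nonneg_left hBW
            positivity
        _ = normD μ Wstar / s := by ring
    calc normD μ V ≤ A + normD μ Wstar := htri
      _ ≤ normD μ Wstar / s + normD μ Wstar / s := add_le_add hA1 hW1
      _ = 2 * normD μ Wstar / s := by ring
end
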